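/- Let n ≥ 1, let Σ₀ be a real symmetric positive definite n×n matrix with smallest eigenvalue λmin > 0, and let Δ be a nonzero real symmetric positive semidefinite n×n matrix such that Σ₀ − Δ is positive definite and such that B := Σ₀^{-1/2} Δ Σ₀^{-1/2} satisfies ‖B‖₂ < 1/2 in spectral norm. Define U := (1/2)(log det Σ₀ − log det(Σ₀ − Δ)) and ΔIMSPE := tr(Δ)/n. Then | U/ΔIMSPE − (n/2)·tr(Σ₀⁻¹Δ)/tr(Δ) | ≤ (n/(2 λmin))·‖B‖₂. -/

import Mathlib

open Matrix

/-- The square root of a positive semidefinite matrix, as defined in the older Mathlib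
(`Matrix.PosSemidef.sqrt`, since removed). -/
noncomputable def Matrix.PosSemidef.sqrt {n 𝕜 : Type*} [Fintype n] [DecidableEq n] [RCLike 𝕜]
    [PartialOrder 𝕜] [StarOrderedRing 𝕜]
    {A : Matrix n n 𝕜} (hA : A.PosSemidef) : Matrix n n 𝕜 :=
  hA.1.eigenvectorUnitary.1 * diagonal ((↑) ∘ (√·) ∘ hA.1.eigenvalues) *
    (star hA.1.eigenvectorUnitary : Matrix n n 𝕜)

/-- The spectral norm (largest singular value) of a real square matrix,
realized as the operator norm of the induced map on Euclidean space. -/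
noncomputable def specNorm {n : ℕ} (B : Matrix (Fin n) (Fin n) ℝ) : ℝ :=
  ‖(Matrix.toEuclideanLin B).toContinuousLinearMap‖

/-!
Write `S = Σ₀^{1/2}`, so that `Δ = S B S` and `Σ₀ - Δ = S (1 - B) S`. With `μᵢ ∈ [0, ‖B‖₂]` the
eigenvalues of `B`, this gives `2U = -∑ log (1 - μᵢ)` and `tr (Σ₀⁻¹ Δ) = tr B = ∑ μᵢ`, so the quantity
to bound is `(n / 2) (-∑ log (1 - μᵢ) - ∑ μᵢ) / tr Δ`. For `0 ≤ μ ≤ 1/2` one has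
`0 ≤ -log (1 - μ) - μ ≤ μ²`, so the numerator is at most `‖B‖₂ tr B`, and `tr Δ = tr (B Σ₀) ≥ λmin tr B`.
-/

namespace Real

lemma neg_log_one_sub_le {x : ℝ} (h0 : 0 ≤ x) (h : x ≤ 1 / 2) : -log (1 - x) ≤ x + x ^ 2 := by
  have hpos : 0 < 1 - x := by linarith
  rw [← log_inv, log_le_iff_le_exp (inv_pos.mpr hpos), inv_le_iff_one_le_mul₀ hpos]
  -- `(1 - x) (1 + y + y² / 2) ≥ 1` for `y = x + x²` and `0 ≤ x ≤ 1/2`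
  have hexp := quadratic_le_exp_of_nonneg (by positivity : 0 ≤ x + x ^ 2)
  nlinarith [mul_le_mul_of_nonneg_left hexp hpos.le, mul_nonneg h0 h0,
    mul_nonneg (mul_nonneg h0 h0) h0]

variable {ι : Type*} [Fintype ι] {μ : ι → ℝ}

lemma sum_le_neg_sum_log_one_sub (hμ : ∀ i, μ i < 1) : ∑ i, μ i ≤ -∑ i, log (1 - μ i) := by
  rw [← Finset.sum_neg_distrib]
  exact Finset.sum_le_sum fun i _ => by linarith [log_le_sub_one_of_pos (sub_pos.mpr (hμ i))]

lemma neg_sum_log_one_sub_le {b : ℝ} (hμ0 : ∀ i, 0 ≤ μ i) (hμb : ∀ i, μ i ≤ b) (hb : b ≤ 1 / 2) :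
    -∑ i, log (1 - μ i) ≤ (1 + b) * ∑ i, μ i := by
  rw [← Finset.sum_neg_distrib, Finset.mul_sum]
  refine Finset.sum_le_sum fun i _ => ?_
  have := neg_log_one_sub_le (hμ0 i) ((hμb i).trans hb)
  nlinarith [mul_le_mul_of_nonneg_left (hμb i) (hμ0 i)]

lemma abs_half_mul_div_div_sub_le {n t l b L T : ℝ} (hn : 0 ≤ n) (ht : 0 ≤ t) (hl : 0 < l)
    (hb : 0 ≤ b) (hTL : T ≤ L) (hLT : L ≤ (1 + b) * T) (hlT : l * T ≤ t) :
    |1 / 2 * L / (t / n) - n / 2 * (T / t)| ≤ n / (2 * l) * b := by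
  have hTt : T / t ≤ 1 / l := div_le_of_le_mul₀ ht (by positivity) (by
    rwa [div_mul_eq_mul_div, one_mul, le_div_iff₀ hl, mul_comm])
  have hratio : 1 / 2 * L / (t / n) - n / 2 * (T / t) = n / 2 * ((L - T) / t) := by
    rw [div_div_eq_mul_div]; ring
  rw [hratio, abs_of_nonneg (mul_nonneg (by positivity) (div_nonneg (sub_nonneg.mpr hTL) ht))]
  calc n / 2 * ((L - T) / t) ≤ n / 2 * (b * (T / t)) := by
        rw [← mul_div_assoc b]; gcongr; linarith
    _ ≤ n / 2 * (b * (1 / l)) := by gcongr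
    _ = n / (2 * l) * b := by ring

end Real

namespace Matrix

open scoped ComplexOrder

variable {ι 𝕜 : Type*} [Fintype ι] [DecidableEq ι] [RCLike 𝕜] {A B : Matrix ι ι 𝕜}

lemma IsHermitian.det_one_sub (hA : A.IsHermitian) :
    (1 - A).det = ∏ i, (1 - (hA.eigenvalues i : 𝕜)) := by
  have h : (1 - A).det = A.charpoly.eval 1 := by rw [eval_charpoly, map_one]
  simp [h, hA.charpoly_eq, Polynomial.eval_prod]

lemma IsHermitian.posSemidef_sub_smul_one (hA : A.IsHermitian) {c : ℝ}
    (hc : ∀ i, c ≤ hA.eigenvalues i) : (A - (c : 𝕜) • 1).PosSemidef := by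
  have hc1 : (c : 𝕜) • (1 : Matrix ι ι 𝕜) =
      Unitary.conjStarAlgAut 𝕜 _ hA.eigenvectorUnitary ((c : 𝕜) • 1) := by simp
  conv => enter [1, 1]; rw [hA.spectral_theorem]
  rw [hc1, ← map_sub, Unitary.conjStarAlgAut_apply, star_eq_conjTranspose]
  refine PosSemidef.mul_mul_conjTranspose_same ?_ _
  rw [← diagonal_one, ← diagonal_smul, diagonal_sub]
  exact posSemidef_diagonal_iff.mpr fun i => by simpa using hc i

lemma PosSemidef.sqrt_eq_conjStarAlgAut (hA : A.PosSemidef) :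
    hA.sqrt = Unitary.conjStarAlgAut 𝕜 _ hA.1.eigenvectorUnitary
      (diagonal ((↑) ∘ (√·) ∘ hA.1.eigenvalues)) :=
  rfl

lemma PosSemidef.sqrt_mul_self (hA : A.PosSemidef) : hA.sqrt * hA.sqrt = A := by
  conv_rhs => rw [hA.1.spectral_theorem]
  rw [hA.sqrt_eq_conjStarAlgAut, ← map_mul, diagonal_mul_diagonal]
  congr 2
  funext i
  simp [← RCLike.ofReal_mul, Real.mul_self_sqrt (hA.eigenvalues_nonneg i)]

lemma PosSemidef.posSemidef_sqrt (hA : A.PosSemidef) : hA.sqrt.PosSemidef := by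
  rw [hA.sqrt_eq_conjStarAlgAut, Unitary.conjStarAlgAut_apply, star_eq_conjTranspose]
  exact (posSemidef_diagonal_iff.mpr fun i => by simp).mul_mul_conjTranspose_same _

lemma PosDef.isUnit_det_sqrt (hA : A.PosDef) : IsUnit hA.posSemidef.sqrt.det := by
  refine isUnit_of_mul_isUnit_left (y := hA.posSemidef.sqrt.det) ?_
  rw [← det_mul, hA.posSemidef.sqrt_mul_self]
  exact (isUnit_iff_isUnit_det A).mp hA.isUnit

lemma PosSemidef.trace_mul_nonneg (hA : A.PosSemidef) (hB : B.PosSemidef) :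
    0 ≤ (A * B).trace := by
  have hBS := hB.mul_mul_conjTranspose_same hA.sqrt
  rw [hA.posSemidef_sqrt.isHermitian.eq] at hBS
  simpa [trace_mul_cycle, hA.sqrt_mul_self] using hBS.trace_nonneg

lemma PosSemidef.smul_trace_le_trace_mul (hB : B.PosSemidef) (hA : A.IsHermitian) {c : ℝ}
    (hc : ∀ i, c ≤ hA.eigenvalues i) : (c : 𝕜) * B.trace ≤ (B * A).trace := by
  have := hB.trace_mul_nonneg (hA.posSemidef_sub_smul_one hc)
  rwa [mul_sub, trace_sub, mul_smul_comm, mul_one, trace_smul, smul_eq_mul, sub_nonneg] at this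

lemma PosSemidef.inv_mul_mul_inv {S Δ : Matrix ι ι 𝕜} (hΔ : Δ.PosSemidef) (hS : S.IsHermitian) :
    (S⁻¹ * Δ * S⁻¹).PosSemidef := by
  simpa [conjTranspose_nonsing_inv, hS.eq] using hΔ.mul_mul_conjTranspose_same S⁻¹

section Whitening

variable {R : Type*} [CommRing R] {S Δ : Matrix ι ι R}

lemma mul_inv_mul_mul_inv_mul (hS : IsUnit S.det) : S * (S⁻¹ * Δ * S⁻¹) * S = Δ := by
  simp only [mul_assoc, nonsing_inv_mul _ hS, mul_one, mul_nonsing_inv_cancel_left _ _ hS]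

lemma det_mul_self_sub (hS : IsUnit S.det) :
    (S * S - Δ).det = (S * S).det * (1 - S⁻¹ * Δ * S⁻¹).det := by
  have h : S * S - Δ = S * (1 - S⁻¹ * Δ * S⁻¹) * S := by
    rw [mul_sub, sub_mul, mul_one, mul_inv_mul_mul_inv_mul hS]
  rw [h, det_mul, det_mul, det_mul, mul_right_comm]

lemma trace_inv_mul_self_mul : ((S * S)⁻¹ * Δ).trace = (S⁻¹ * Δ * S⁻¹).trace := by
  rw [mul_inv_rev, mul_assoc, trace_mul_comm, mul_assoc]

lemma trace_eq_trace_inv_mul_mul_inv_mul (hS : IsUnit S.det) :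
    Δ.trace = (S⁻¹ * Δ * S⁻¹ * (S * S)).trace := by
  conv_lhs => rw [← mul_inv_mul_mul_inv_mul (Δ := Δ) hS]
  rw [trace_mul_cycle, trace_mul_comm]

end Whitening

section LogDet

variable {B : Matrix ι ι ℝ}

lemma IsHermitian.det_one_sub_pos (hB : B.IsHermitian) (h : ∀ i, hB.eigenvalues i < 1) :
    0 < (1 - B).det := by
  rw [hB.det_one_sub]
  exact Finset.prod_pos fun i _ => by simpa using h i

lemma IsHermitian.log_det_one_sub (hB : B.IsHermitian) (h : ∀ i, hB.eigenvalues i < 1) :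
    Real.log (1 - B).det = ∑ i, Real.log (1 - hB.eigenvalues i) := by
  rw [hB.det_one_sub, Real.log_prod fun i _ => by simpa [sub_eq_zero] using (h i).ne']
  rfl

lemma PosSemidef.trace_le_neg_log_det_one_sub (hB : B.PosSemidef)
    (h : ∀ i, hB.isHermitian.eigenvalues i < 1) : B.trace ≤ -Real.log (1 - B).det := by
  rw [hB.isHermitian.log_det_one_sub h, hB.isHermitian.trace_eq_sum_eigenvalues]
  exact Real.sum_le_neg_sum_log_one_sub h

lemma PosSemidef.neg_log_det_one_sub_le (hB : B.PosSemidef) {b : ℝ}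
    (hμb : ∀ i, hB.isHermitian.eigenvalues i ≤ b) (hb : b ≤ 1 / 2) :
    -Real.log (1 - B).det ≤ (1 + b) * B.trace := by
  rw [hB.isHermitian.log_det_one_sub fun i => by linarith [hμb i],
    hB.isHermitian.trace_eq_sum_eigenvalues]
  exact Real.neg_sum_log_one_sub_le hB.eigenvalues_nonneg hμb hb

end LogDet

lemma IsHermitian.abs_eigenvalues_le_specNorm {n : ℕ} {B : Matrix (Fin n) (Fin n) ℝ}
    (hB : B.IsHermitian) (i : Fin n) : |hB.eigenvalues i| ≤ specNorm B := by
  set v := hB.eigenvectorBasis i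
  have hv : ‖v‖ = 1 := hB.eigenvectorBasis.orthonormal.1 i
  have hBv : (toEuclideanLin B).toContinuousLinearMap v = hB.eigenvalues i • v := by
    simpa [toLpLin_apply] using congrArg (WithLp.toLp 2) (hB.mulVec_eigenvectorBasis i)
  simpa [specNorm, hBv, norm_smul, hv] using (toEuclideanLin B).toContinuousLinearMap.le_opNorm v

end Matrix

open Matrix

theorem mi_imspe_ratio_quantitative_estimate_general
    {n : ℕ}
    (S0 Δ : Matrix (Fin n) (Fin n) ℝ)
    (hS0 : S0.PosDef)
    (lmin : ℝ) (hlmin : 0 < lmin)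
    (hmin : lmin = ⨅ i, hS0.isHermitian.eigenvalues i)
    (hΔ : Δ.PosSemidef)
    (B : Matrix (Fin n) (Fin n) ℝ)
    (hB : B = (hS0.posSemidef.sqrt)⁻¹ * Δ * (hS0.posSemidef.sqrt)⁻¹)
    (hBnorm : specNorm B < 1 / 2) :
    |((1 / 2) * (Real.log S0.det - Real.log (S0 - Δ).det)) / (Δ.trace / (n : ℝ))
        - ((n : ℝ) / 2) * ((S0⁻¹ * Δ).trace / Δ.trace)|
      ≤ ((n : ℝ) / (2 * lmin)) * specNorm B := by
  set S := hS0.posSemidef.sqrt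
  have hSS : S * S = S0 := hS0.posSemidef.sqrt_mul_self
  have hS : IsUnit S.det := hS0.isUnit_det_sqrt
  have hBpsd : B.PosSemidef := hB ▸ hΔ.inv_mul_mul_inv hS0.posSemidef.posSemidef_sqrt.isHermitian
  have hμb i : hBpsd.isHermitian.eigenvalues i ≤ specNorm B :=
    (le_abs_self _).trans (hBpsd.isHermitian.abs_eigenvalues_le_specNorm i)
  have hμ1 i : hBpsd.isHermitian.eigenvalues i < 1 := by linarith [hμb i]
  have hlogdet : Real.log S0.det - Real.log (S0 - Δ).det = -Real.log (1 - B).det := by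
    rw [← hSS, det_mul_self_sub hS, ← hB,
      Real.log_mul (hSS ▸ hS0.det_pos.ne') (hBpsd.isHermitian.det_one_sub_pos hμ1).ne']
    ring
  have htrB : (S0⁻¹ * Δ).trace = B.trace := by rw [← hSS, trace_inv_mul_self_mul, hB]
  have htrΔ : lmin * B.trace ≤ Δ.trace := by
    rw [trace_eq_trace_inv_mul_mul_inv_mul (Δ := Δ) hS, ← hB, hSS]
    simpa using hBpsd.smul_trace_le_trace_mul hS0.isHermitian (c := lmin) fun i =>
      hmin ▸ ciInf_le (Finite.bddBelow_range _) i
  rw [hlogdet, htrB]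
  exact Real.abs_half_mul_div_div_sub_le n.cast_nonneg hΔ.trace_nonneg hlmin (norm_nonneg _)
    (hBpsd.trace_le_neg_log_det_one_sub hμ1) (hBpsd.neg_log_det_one_sub_le hμb hBnorm.le) htrΔ

/-- Key quantitative estimate in the proof of Theorem 1: for a symmetric positive
definite `Σ₀` with smallest eigenvalue `λmin > 0` and a nonzero symmetric positive
semidefinite `Δ` with `Σ₀ - Δ` positive definite and
`B = Σ₀^{-1/2} Δ Σ₀^{-1/2}` of spectral norm `< 1/2`, the
mutual-information-to-IMSPE ratio differs from the spectrally weighted trace ratio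
`(n/2)·tr(Σ₀⁻¹Δ)/tr(Δ)` by at most `(n/(2 λmin))·‖B‖₂`. -/
theorem mi_imspe_ratio_quantitative_estimate
    {n : ℕ} (hn : 1 ≤ n)
    (S0 Δ : Matrix (Fin n) (Fin n) ℝ)
    (hS0 : S0.PosDef)
    (lmin : ℝ) (hlmin : 0 < lmin)
    (hmin : lmin = ⨅ i, hS0.isHermitian.eigenvalues i)
    (hΔne : Δ ≠ 0) (hΔ : Δ.PosSemidef) (hpd : (S0 - Δ).PosDef)
    (B : Matrix (Fin n) (Fin n) ℝ)
    (hB : B = (hS0.posSemidef.sqrt)⁻¹ * Δ * (hS0.posSemidef.sqrt)⁻¹)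
    (hBnorm : specNorm B < 1 / 2) :
    |((1 / 2) * (Real.log S0.det - Real.log (S0 - Δ).det)) / (Δ.trace / (n : ℝ))
        - ((n : ℝ) / 2) * ((S0⁻¹ * Δ).trace / Δ.trace)|
      ≤ ((n : ℝ) / (2 * lmin)) * specNorm B :=
  mi_imspe_ratio_quantitative_estimate_general S0 Δ hS0 lmin hlmin hmin hΔ B hB hBnorm
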